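/- Let 𝒴 ⊆ 𝒳 ⊆ Φ with 𝒳 almost parabolic of spherical type, and let u ∈ W_𝒳 be of minimal length in the coset uW_𝒴 with respect to the word length of W_𝒳 in the generating set R_𝒳. Then u(𝒴) ⊆ Φ is again almost parabolic of spherical type, W_{u(𝒴)} = uW_𝒴u⁻¹, u(o_𝒴) = o_{u(𝒴)}, and the action of u on V restricts to a bijective isometry of C[𝒴] onto C[u(𝒴)] sending z(o_𝒴) to (uzu⁻¹)(o_{u(𝒴)}) for every z ∈ W_𝒴. -/

import Mathlib

/-!
Context: `(W, S)` is a Coxeter system for the Coxeter matrix `M` (Mathlib's convention: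
the entry `0` encodes `∞`).  `V = ⊕_{s ∈ S} ℝ·α_s` is realized as `S →₀ ℝ` with
`α_s = simpleRoot s`, equipped with the canonical symmetric bilinear form `bform M`.
The canonical faithful form-preserving representation `ρ : W →* GL(V)` and the map
`β ↦ r_β` assigning to each root its reflection are given as data, characterized by
the usual formulas (`hρ`, `hρinj`, `hρform`, `hr` below).
-/

noncomputable section

open scoped Real Pointwise

variable {S W : Type*}

/-- The simple root `α_s`. -/
def simpleRoot (s : S) : S →₀ ℝ := Finsupp.single s 1

/-- The entry `⟨α_s, α_t⟩ = -cos (π / m_{s,t})` of the canonical bilinear form,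
interpreted as `-1` when `m_{s,t} = ∞` (encoded by `0`). -/
def formEntry (M : CoxeterMatrix S) (s t : S) : ℝ :=
  if M s t = 0 then -1 else -Real.cos (Real.pi / (M s t : ℝ))

/-- The canonical symmetric bilinear form on `V = ⊕_{s ∈ S} ℝ·α_s`. -/
def bform (M : CoxeterMatrix S) : (S →₀ ℝ) →ₗ[ℝ] (S →₀ ℝ) →ₗ[ℝ] ℝ :=
  Finsupp.basisSingleOne.constr ℝ fun s =>
    Finsupp.basisSingleOne.constr ℝ fun t => formEntry M s t

variable [Group W]

/-- The root system `Φ = { w (α_s) : w ∈ W, s ∈ S }`. -/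
def rootSystem (ρ : W →* ((S →₀ ℝ) ≃ₗ[ℝ] (S →₀ ℝ))) : Set (S →₀ ℝ) :=
  Set.range fun p : W × S => ρ p.1 (simpleRoot p.2)

/-- A subset `𝒳 ⊆ V` is almost parabolic (AP): (AP1) the vectors of `𝒳` are linearly
independent, and (AP2) any two elements of `𝒳` are of the form `w (α_s)`, `w (α_t)` for a
common `w ∈ W`. -/
def IsAP (ρ : W →* ((S →₀ ℝ) ≃ₗ[ℝ] (S →₀ ℝ))) (𝒳 : Set (S →₀ ℝ)) : Prop :=
  LinearIndependent ℝ ((↑) : 𝒳 → (S →₀ ℝ)) ∧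
    ∀ β ∈ 𝒳, ∀ γ ∈ 𝒳, ∃ (w : W) (s t : S),
      ρ w (simpleRoot s) = β ∧ ρ w (simpleRoot t) = γ

/-- `g ∈ W` is a product of `n` elements of `T`. -/
def HasLen (T : Set W) (g : W) (n : ℕ) : Prop :=
  ∃ l : List W, (∀ x ∈ l, x ∈ T) ∧ l.prod = g ∧ l.length = n

/-- `u` has minimal word length (w.r.t. the generating set `T`) in the coset `u·H`. -/
def MinimalInCoset (T : Set W) (H : Subgroup W) (u : W) : Prop :=
  ∀ h ∈ H, ∀ m, HasLen T (u * h) m → ∃ n ≤ m, HasLen T u n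

/-!
Conjugation by the isometry `u` transports everything: it maps roots to roots, conjugates
reflections (`r_{u β} = u r_β u⁻¹`), and preserves linear independence and convex hulls. The one
point needing an argument is `u (o_𝒴) = o_{u(𝒴)}`: both vectors lie in `span u(𝒴)` and pair to `1`
with `u(𝒴)`, so it suffices that a vector `d ∈ span 𝒵` orthogonal to a set of roots `𝒵` whose
reflections generate a finite group is `0`. Averaging a positive definite form over that group
gives an invariant one; since `r_β` negates `β` and fixes `d`, invariance makes `d` orthogonal to
every `β ∈ 𝒵` for the averaged form too, hence to itself.
-/

section InvariantForm

variable {V G : Type*} [AddCommGroup V] [Module ℝ V] [Group G]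

def averagedForm (P : V →ₗ[ℝ] V →ₗ[ℝ] ℝ) (ρ : G →* (V ≃ₗ[ℝ] V)) (F : Finset G) :
    V →ₗ[ℝ] V →ₗ[ℝ] ℝ :=
  ∑ g ∈ F, P.compl₁₂ (ρ g : V →ₗ[ℝ] V) (ρ g : V →ₗ[ℝ] V)

variable (P : V →ₗ[ℝ] V →ₗ[ℝ] ℝ) (ρ : G →* (V ≃ₗ[ℝ] V))

lemma averagedForm_apply (F : Finset G) (x y : V) :
    averagedForm P ρ F x y = ∑ g ∈ F, P (ρ g x) (ρ g y) := by
  simp [averagedForm, LinearMap.sum_apply]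

lemma averagedForm_map {H : Subgroup G} (hH : (H : Set G).Finite) {h : G} (hh : h ∈ H)
    (x y : V) :
    averagedForm P ρ hH.toFinset (ρ h x) (ρ h y) = averagedForm P ρ hH.toFinset x y := by
  simp only [averagedForm_apply, ← LinearEquiv.mul_apply, ← map_mul]
  refine Finset.sum_equiv (Equiv.mulRight h) (fun g => ?_) (fun g _ => rfl)
  simpa using (H.mul_mem_cancel_right hh).symm

lemma averagedForm_self_eq_zero {F : Finset G} (hF : 1 ∈ F) (hP : P.IsNonneg)
    (hPani : ∀ x, P x x = 0 → x = 0) {x : V} (hx : averagedForm P ρ F x x = 0) : x = 0 := by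
  rw [averagedForm_apply, Finset.sum_eq_zero_iff_of_nonneg fun g _ => hP.nonneg _] at hx
  simpa using hPani _ (hx 1 hF)

lemma eq_zero_of_mem_span_of_forall_exists_neg_fixed (hP : P.IsNonneg)
    (hPani : ∀ x, P x x = 0 → x = 0) {H : Subgroup G} (hH : (H : Set G).Finite) {𝒵 : Set V}
    {d : V} (hd : d ∈ Submodule.span ℝ 𝒵)
    (hfix : ∀ β ∈ 𝒵, ∃ h ∈ H, ρ h β = -β ∧ ρ h d = d) : d = 0 := by
  set Q := averagedForm P ρ hH.toFinset
  have hQ : ∀ β ∈ 𝒵, Q d β = 0 := by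
    intro β hβ
    obtain ⟨h, hh, hβneg, hdfix⟩ := hfix β hβ
    have : Q d β = -Q d β :=
      calc Q d β = Q (ρ h d) (ρ h β) := (averagedForm_map P ρ hH hh d β).symm
        _ = -Q d β := by rw [hβneg, hdfix, map_neg]
    linarith
  have hspan : Submodule.span ℝ 𝒵 ≤ LinearMap.ker (Q d) :=
    Submodule.span_le.mpr hQ
  exact averagedForm_self_eq_zero P ρ (hH.mem_toFinset.mpr H.one_mem) hP hPani (hspan hd)

end InvariantForm

lemma simpleRoot_eq_basisSingleOne (s : S) : simpleRoot s = Finsupp.basisSingleOne s := by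
  rw [Finsupp.coe_basisSingleOne, simpleRoot]

lemma bform_simpleRoot (M : CoxeterMatrix S) (s t : S) :
    bform M (simpleRoot s) (simpleRoot t) = formEntry M s t := by
  rw [simpleRoot_eq_basisSingleOne, simpleRoot_eq_basisSingleOne, bform,
    Module.Basis.constr_basis, Module.Basis.constr_basis]

lemma bform_comm (M : CoxeterMatrix S) (x y : S →₀ ℝ) : bform M x y = bform M y x := by
  suffices (bform M).flip = bform M from congrArg (fun B => B y x) this
  refine LinearMap.ext_basis Finsupp.basisSingleOne Finsupp.basisSingleOne fun s t => ?_
  rw [LinearMap.flip_apply, ← simpleRoot_eq_basisSingleOne, ← simpleRoot_eq_basisSingleOne,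
    bform_simpleRoot, bform_simpleRoot, formEntry, formEntry, M.symmetric]

def dotForm : (S →₀ ℝ) →ₗ[ℝ] (S →₀ ℝ) →ₗ[ℝ] ℝ :=
  Finsupp.basisSingleOne.constr ℝ Finsupp.lapply

lemma dotForm_self (x : S →₀ ℝ) : dotForm x x = ∑ s ∈ x.support, x s ^ 2 := by
  simp [dotForm, Module.Basis.constr_apply, Finsupp.sum, sq]

lemma dotForm_isNonneg : (dotForm : (S →₀ ℝ) →ₗ[ℝ] (S →₀ ℝ) →ₗ[ℝ] ℝ).IsNonneg :=
  ⟨fun x => by rw [dotForm_self]; positivity⟩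

lemma eq_zero_of_dotForm_self_eq_zero {x : S →₀ ℝ} (hx : dotForm x x = 0) : x = 0 := by
  rw [dotForm_self, Finset.sum_eq_zero_iff_of_nonneg fun s _ => sq_nonneg _] at hx
  ext s
  by_contra hs
  exact pow_ne_zero 2 hs (hx s (Finsupp.mem_support_iff.mpr hs))

lemma LinearEquiv.bijOn_convexHull {E F : Type*} [AddCommGroup E] [Module ℝ E] [AddCommGroup F]
    [Module ℝ F] (e : E ≃ₗ[ℝ] F) (s : Set E) :
    Set.BijOn e (convexHull ℝ s) (convexHull ℝ (e '' s)) := by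
  have h := (e : E →ₗ[ℝ] F).image_convexHull s
  rw [LinearEquiv.coe_coe] at h
  exact h ▸ e.injective.injOn.bijOn_image

section Reflections

variable {M : CoxeterMatrix S} {cs : CoxeterSystem M W}
  {ρ : W →* ((S →₀ ℝ) ≃ₗ[ℝ] (S →₀ ℝ))} {r : (S →₀ ℝ) → W}

lemma map_mem_rootSystem {β : S →₀ ℝ} (hβ : β ∈ rootSystem ρ) (u : W) :
    ρ u β ∈ rootSystem ρ := by
  obtain ⟨⟨w, s⟩, rfl⟩ := hβ
  exact ⟨(u * w, s), by simp⟩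

lemma IsAP.mono {𝒳 𝒴 : Set (S →₀ ℝ)} (h𝒳 : IsAP ρ 𝒳) (h𝒴𝒳 : 𝒴 ⊆ 𝒳) : IsAP ρ 𝒴 :=
  ⟨linearIndependent_subtype_iff.mpr ((linearIndependent_subtype_iff.mp h𝒳.1).mono h𝒴𝒳),
    fun β hβ γ hγ => h𝒳.2 β (h𝒴𝒳 hβ) γ (h𝒴𝒳 hγ)⟩

lemma IsAP.image {𝒳 : Set (S →₀ ℝ)} (h𝒳 : IsAP ρ 𝒳) (u : W) : IsAP ρ (ρ u '' 𝒳) := by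
  refine ⟨?_, ?_⟩
  · have h := (linearIndependent_subtype_iff.mp h𝒳.1).id_imageₛ
      (f := (ρ u : (S →₀ ℝ) →ₗ[ℝ] (S →₀ ℝ))) (ρ u).injective.injOn
    rw [LinearEquiv.coe_coe] at h
    exact linearIndependent_subtype_iff.mpr h
  · rintro _ ⟨β, hβ, rfl⟩ _ ⟨γ, hγ, rfl⟩
    obtain ⟨w, s, t, rfl, rfl⟩ := h𝒳.2 β hβ γ hγ
    exact ⟨u * w, s, t, by simp, by simp⟩

lemma bform_self_of_mem_rootSystem
    (hρform : ∀ (w : W) (x y : S →₀ ℝ), bform M (ρ w x) (ρ w y) = bform M x y)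
    {β : S →₀ ℝ} (hβ : β ∈ rootSystem ρ) : bform M β β = 1 := by
  obtain ⟨⟨w, s⟩, rfl⟩ := hβ
  rw [hρform, bform_simpleRoot, formEntry, M.diagonal]
  norm_num

lemma apply_conj_simple
    (hρ : ∀ (s : S) (v : S →₀ ℝ),
      ρ (cs.simple s) v = v - (2 * bform M (simpleRoot s) v) • simpleRoot s)
    (hρform : ∀ (w : W) (x y : S →₀ ℝ), bform M (ρ w x) (ρ w y) = bform M x y)
    (w : W) (s : S) (v : S →₀ ℝ) :
    ρ (w * cs.simple s * w⁻¹) v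
      = v - (2 * bform M (ρ w (simpleRoot s)) v) • ρ w (simpleRoot s) := by
  have hv : ρ w (ρ w⁻¹ v) = v := by
    rw [← LinearEquiv.mul_apply, ← map_mul, mul_inv_cancel, map_one]
    rfl
  rw [map_mul, map_mul, LinearEquiv.mul_apply, LinearEquiv.mul_apply, hρ, map_sub, map_smul, hv,
    ← hρform w, hv]

lemma reflection_apply
    (hρ : ∀ (s : S) (v : S →₀ ℝ),
      ρ (cs.simple s) v = v - (2 * bform M (simpleRoot s) v) • simpleRoot s)
    (hρform : ∀ (w : W) (x y : S →₀ ℝ), bform M (ρ w x) (ρ w y) = bform M x y)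
    (hr : ∀ (w : W) (s : S), r (ρ w (simpleRoot s)) = w * cs.simple s * w⁻¹)
    {β : S →₀ ℝ} (hβ : β ∈ rootSystem ρ) (v : S →₀ ℝ) :
    ρ (r β) v = v - (2 * bform M β v) • β := by
  obtain ⟨⟨w, s⟩, rfl⟩ := hβ
  exact hr w s ▸ apply_conj_simple hρ hρform w s v

lemma reflection_conj (hr : ∀ (w : W) (s : S), r (ρ w (simpleRoot s)) = w * cs.simple s * w⁻¹)
    {β : S →₀ ℝ} (hβ : β ∈ rootSystem ρ) (u : W) : r (ρ u β) = u * r β * u⁻¹ := by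
  obtain ⟨⟨w, s⟩, rfl⟩ := hβ
  rw [← LinearEquiv.mul_apply, ← map_mul, hr, hr]
  group

lemma closure_reflections_image
    (hr : ∀ (w : W) (s : S), r (ρ w (simpleRoot s)) = w * cs.simple s * w⁻¹)
    {𝒴 : Set (S →₀ ℝ)} (h𝒴 : 𝒴 ⊆ rootSystem ρ) (u : W) :
    Subgroup.closure (r '' (ρ u '' 𝒴)) =
      Subgroup.map (MulAut.conj u).toMonoidHom (Subgroup.closure (r '' 𝒴)) := by
  rw [MonoidHom.map_closure, Set.image_image, Set.image_image]
  exact congrArg _ (Set.image_congr fun β hβ => reflection_conj hr (h𝒴 hβ) u)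

lemma eq_of_mem_span_of_forall_bform_eq
    (hρ : ∀ (s : S) (v : S →₀ ℝ),
      ρ (cs.simple s) v = v - (2 * bform M (simpleRoot s) v) • simpleRoot s)
    (hρform : ∀ (w : W) (x y : S →₀ ℝ), bform M (ρ w x) (ρ w y) = bform M x y)
    (hr : ∀ (w : W) (s : S), r (ρ w (simpleRoot s)) = w * cs.simple s * w⁻¹)
    {𝒵 : Set (S →₀ ℝ)} (h𝒵 : 𝒵 ⊆ rootSystem ρ)
    (hfin : (Subgroup.closure (r '' 𝒵) : Set W).Finite) {v v' : S →₀ ℝ}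
    (hv : v ∈ Submodule.span ℝ 𝒵) (hv' : v' ∈ Submodule.span ℝ 𝒵)
    (h : ∀ γ ∈ 𝒵, bform M γ v = bform M γ v') : v = v' := by
  refine sub_eq_zero.mp (eq_zero_of_mem_span_of_forall_exists_neg_fixed dotForm ρ
    dotForm_isNonneg (fun _ => eq_zero_of_dotForm_self_eq_zero) hfin (sub_mem hv hv')
    fun β hβ => ⟨r β, Subgroup.subset_closure (Set.mem_image_of_mem r hβ), ?_, ?_⟩)
  · rw [reflection_apply hρ hρform hr (h𝒵 hβ), bform_self_of_mem_rootSystem hρform (h𝒵 hβ)]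
    module
  · rw [reflection_apply hρ hρform hr (h𝒵 hβ), map_sub, h β hβ, sub_self, mul_zero, zero_smul,
      sub_zero]

end Reflections

theorem statement4_general
    (M : CoxeterMatrix S) (cs : CoxeterSystem M W)
    (ρ : W →* ((S →₀ ℝ) ≃ₗ[ℝ] (S →₀ ℝ)))
    (hρ : ∀ (s : S) (v : S →₀ ℝ),
      ρ (cs.simple s) v = v - (2 * bform M (simpleRoot s) v) • simpleRoot s)
    (hρform : ∀ (w : W) (x y : S →₀ ℝ), bform M (ρ w x) (ρ w y) = bform M x y)
    (r : (S →₀ ℝ) → W)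
    (hr : ∀ (w : W) (s : S), r (ρ w (simpleRoot s)) = w * cs.simple s * w⁻¹)
    (𝒳 𝒴 : Set (S →₀ ℝ)) (h𝒴𝒳 : 𝒴 ⊆ 𝒳) (h𝒳Φ : 𝒳 ⊆ rootSystem ρ) (hAP : IsAP ρ 𝒳)
    (hsph : ((Subgroup.closure (r '' 𝒳) : Set W)).Finite)
    (u : W)
    (o𝒴 : S →₀ ℝ) (ho𝒴span : o𝒴 ∈ Submodule.span ℝ 𝒴)
    (ho𝒴 : ∀ γ ∈ 𝒴, bform M o𝒴 γ = 1)
    (ou𝒴 : S →₀ ℝ) (hou𝒴span : ou𝒴 ∈ Submodule.span ℝ (⇑(ρ u) '' 𝒴))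
    (hou𝒴 : ∀ γ ∈ ⇑(ρ u) '' 𝒴, bform M ou𝒴 γ = 1) :
    IsAP ρ (⇑(ρ u) '' 𝒴) ∧
    ((Subgroup.closure (r '' (⇑(ρ u) '' 𝒴)) : Set W)).Finite ∧
    Subgroup.closure (r '' (⇑(ρ u) '' 𝒴)) =
      Subgroup.map (MulAut.conj u).toMonoidHom (Subgroup.closure (r '' 𝒴)) ∧
    ρ u o𝒴 = ou𝒴 ∧
    (∀ x y : S →₀ ℝ, bform M (ρ u x) (ρ u y) = bform M x y) ∧
    Set.BijOn (⇑(ρ u))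
      (convexHull ℝ ((fun z : W => ρ z o𝒴) '' ((Subgroup.closure (r '' 𝒴) : Set W))))
      (convexHull ℝ ((fun z : W => ρ z ou𝒴) ''
        ((Subgroup.closure (r '' (⇑(ρ u) '' 𝒴)) : Set W)))) ∧
    ∀ z ∈ Subgroup.closure (r '' 𝒴), ρ u (ρ z o𝒴) = ρ (u * z * u⁻¹) ou𝒴 := by
  have h𝒴Φ : 𝒴 ⊆ rootSystem ρ := h𝒴𝒳.trans h𝒳Φ
  have hu𝒴Φ : ⇑(ρ u) '' 𝒴 ⊆ rootSystem ρ := by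
    rintro _ ⟨β, hβ, rfl⟩
    exact map_mem_rootSystem (h𝒴Φ hβ) u
  have hconj := closure_reflections_image hr h𝒴Φ u
  have hfin : ((Subgroup.closure (r '' (⇑(ρ u) '' 𝒴)) : Set W)).Finite := by
    rw [hconj, Subgroup.coe_map]
    exact (hsph.subset (Subgroup.closure_mono (Set.image_mono h𝒴𝒳))).image _
  have ho : ρ u o𝒴 = ou𝒴 := by
    refine eq_of_mem_span_of_forall_bform_eq hρ hρform hr hu𝒴Φ hfin ?_ hou𝒴span ?_
    · simpa using Submodule.apply_mem_span_image_of_mem_span (ρ u : (S →₀ ℝ) →ₗ[ℝ] (S →₀ ℝ))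
        ho𝒴span
    · rintro _ ⟨γ, hγ, rfl⟩
      rw [hρform, bform_comm, ho𝒴 γ hγ, bform_comm, hou𝒴 _ (Set.mem_image_of_mem _ hγ)]
  have horbit : ∀ z : W, ρ u (ρ z o𝒴) = ρ (u * z * u⁻¹) ou𝒴 := fun z => by
    rw [← ho]
    simp only [← LinearEquiv.mul_apply, ← map_mul, inv_mul_cancel_right]
  refine ⟨(hAP.mono h𝒴𝒳).image u, hfin, hconj, ho, hρform u, ?_, fun z _ => horbit z⟩
  convert (ρ u).bijOn_convexHull _ using 2
  rw [hconj, Subgroup.coe_map, Set.image_image, Set.image_image]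
  exact Set.image_congr fun z _ => (horbit z).symm

/-- Let `𝒴 ⊆ 𝒳 ⊆ Φ` with `𝒳` AP of spherical type and let `u ∈ W_𝒳` have
minimal word length (w.r.t. the generating set `R_𝒳`) in the coset `u·W_𝒴`.  Then `u(𝒴)` is
again AP of spherical type, `W_{u(𝒴)} = u W_𝒴 u⁻¹`, `u (o_𝒴) = o_{u(𝒴)}`, and the action of
`u` restricts to a bijective isometry of `C[𝒴]` onto `C[u(𝒴)]` sending `z (o_𝒴)` to
`(u z u⁻¹) (o_{u(𝒴)})` for every `z ∈ W_𝒴`.  (The points `o_𝒴` and `o_{u(𝒴)}` are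
characterized as the unique vectors of the respective spans pairing to `1` with every root
of `𝒴`, resp. `u(𝒴)`.) -/
theorem statement4
    (M : CoxeterMatrix S) (cs : CoxeterSystem M W)
    (ρ : W →* ((S →₀ ℝ) ≃ₗ[ℝ] (S →₀ ℝ)))
    (hρ : ∀ (s : S) (v : S →₀ ℝ),
      ρ (cs.simple s) v = v - (2 * bform M (simpleRoot s) v) • simpleRoot s)
    (hρinj : Function.Injective ρ)
    (hρform : ∀ (w : W) (x y : S →₀ ℝ), bform M (ρ w x) (ρ w y) = bform M x y)
    (r : (S →₀ ℝ) → W)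
    (hr : ∀ (w : W) (s : S), r (ρ w (simpleRoot s)) = w * cs.simple s * w⁻¹)
    (𝒳 𝒴 : Set (S →₀ ℝ)) (h𝒴𝒳 : 𝒴 ⊆ 𝒳) (h𝒳Φ : 𝒳 ⊆ rootSystem ρ) (hAP : IsAP ρ 𝒳)
    (hsph : ((Subgroup.closure (r '' 𝒳) : Set W)).Finite)
    (u : W) (hu : u ∈ Subgroup.closure (r '' 𝒳))
    (humin : MinimalInCoset (r '' 𝒳) (Subgroup.closure (r '' 𝒴)) u)
    (o𝒴 : S →₀ ℝ) (ho𝒴span : o𝒴 ∈ Submodule.span ℝ 𝒴)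
    (ho𝒴 : ∀ γ ∈ 𝒴, bform M o𝒴 γ = 1)
    (ou𝒴 : S →₀ ℝ) (hou𝒴span : ou𝒴 ∈ Submodule.span ℝ (⇑(ρ u) '' 𝒴))
    (hou𝒴 : ∀ γ ∈ ⇑(ρ u) '' 𝒴, bform M ou𝒴 γ = 1) :
    IsAP ρ (⇑(ρ u) '' 𝒴) ∧
    ((Subgroup.closure (r '' (⇑(ρ u) '' 𝒴)) : Set W)).Finite ∧
    Subgroup.closure (r '' (⇑(ρ u) '' 𝒴)) =
      Subgroup.map (MulAut.conj u).toMonoidHom (Subgroup.closure (r '' 𝒴)) ∧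
    ρ u o𝒴 = ou𝒴 ∧
    (∀ x y : S →₀ ℝ, bform M (ρ u x) (ρ u y) = bform M x y) ∧
    Set.BijOn (⇑(ρ u))
      (convexHull ℝ ((fun z : W => ρ z o𝒴) '' ((Subgroup.closure (r '' 𝒴) : Set W))))
      (convexHull ℝ ((fun z : W => ρ z ou𝒴) ''
        ((Subgroup.closure (r '' (⇑(ρ u) '' 𝒴)) : Set W)))) ∧
    ∀ z ∈ Subgroup.closure (r '' 𝒴), ρ u (ρ z o𝒴) = ρ (u * z * u⁻¹) ou𝒴 :=
  statement4_general M cs ρ hρ hρform r hr 𝒳 𝒴 h𝒴𝒳 h𝒳Φ hAP hsph u o𝒴 ho𝒴span ho𝒴 ou𝒴 hou𝒴span hou𝒴
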